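/- On H_m(𝔹), for every f ∈ H_m(𝔹) the identity M_z* δ f = (M_z* M_z)^{-1} (M_z* f) holds, where (M_z* M_z)^{-1} denotes the inverse of the invertible operator M_z* M_z : Im M_z* → Im M_z*. -/

import Mathlib

/-!
Each `M_{z_i}` maps the orthogonal monomial `e α` to `e (α + ε_i)`, so its adjoint maps
`e (γ + ε_i)` to `(ρ_m(γ) / ρ_m(γ + ε_i)) • e γ = ((γ_i + 1) / (m + |γ|)) • e γ` and kills `e β`
when `β_i = 0`. Summing over `i`, `M_z M_z*` is diagonal with eigenvalue `|β| / (m + |β| - 1)`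
on `e β`, which `δ` inverts for `|β| ≠ 0`, while `M_z*` kills the constants. So
`M_z* (M_z M_z* δ) = M_z*` holds on every monomial and extends by density.
-/

open scoped InnerProductSpace

set_option synthInstance.maxHeartbeats 400000
set_option maxHeartbeats 800000

instance piLp_completeSpace {H : Type*} [NormedAddCommGroup H] [InnerProductSpace ℂ H]
    [CompleteSpace H] {n : ℕ} : CompleteSpace (PiLp 2 (fun _ : Fin n => H)) := by
  have e := (PiLp.continuousLinearEquiv 2 ℂ (fun _ : Fin n => H)).symm
  exact (e.isUniformEmbedding.isUniformInducing.completeSpace_congr e.surjective).mp inferInstance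

/-- The weight `ρ_m(α) = (m+|α|-1)!/(α!(m-1)!)`. -/
noncomputable def rhoR (m : ℕ) {n : ℕ} (α : Fin n → ℕ) : ℝ :=
  ((m + (∑ i, α i) - 1).factorial : ℝ) /
    ((∏ i, ((α i).factorial : ℝ)) * ((m - 1).factorial : ℝ))

open scoped InnerProduct

section OrthogonalFamily

variable {ι 𝕜 H : Type*} [RCLike 𝕜] [NormedAddCommGroup H] [InnerProductSpace 𝕜 H] {e : ι → H}

theorem eq_of_forall_inner_eq_of_dense_span
    (hdense : Dense (Submodule.span 𝕜 (Set.range e) : Set H)) {x y : H}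
    (h : ∀ α, ⟪e α, x⟫_𝕜 = ⟪e α, y⟫_𝕜) : x = y := by
  refine hdense.eq_of_inner_right 𝕜 fun v hv => ?_
  induction hv using Submodule.span_induction with
  | mem v hv => obtain ⟨α, rfl⟩ := hv; exact h α
  | zero => simp
  | add u v _ _ hu hv => rw [inner_add_left, inner_add_left, hu, hv]
  | smul c v _ hv => rw [inner_smul_left, inner_smul_left, hv]

variable [CompleteSpace H] [DecidableEq ι] {w : ι → 𝕜} {σ : ι → ι} {T : H →L[𝕜] H}

theorem ContinuousLinearMap.adjoint_apply_eq_zero_of_notMem_range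
    (horth : ∀ α β, ⟪e α, e β⟫_𝕜 = if α = β then w α else 0)
    (hdense : Dense (Submodule.span 𝕜 (Set.range e) : Set H))
    (hT : ∀ α, T (e α) = e (σ α)) {β : ι} (hβ : β ∉ Set.range σ) : (T†) (e β) = 0 := by
  refine eq_of_forall_inner_eq_of_dense_span hdense fun α => ?_
  rw [T.adjoint_inner_right, hT, horth, if_neg fun h => hβ ⟨α, h⟩, inner_zero_right]

theorem ContinuousLinearMap.adjoint_apply_eq_smul_of_injective
    (horth : ∀ α β, ⟪e α, e β⟫_𝕜 = if α = β then w α else 0)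
    (hdense : Dense (Submodule.span 𝕜 (Set.range e) : Set H))
    (hT : ∀ α, T (e α) = e (σ α)) (hσ : σ.Injective) {γ : ι} (hγ : w γ ≠ 0) :
    (T†) (e (σ γ)) = (w (σ γ) / w γ) • e γ := by
  refine eq_of_forall_inner_eq_of_dense_span hdense fun α => ?_
  rw [T.adjoint_inner_right, hT, horth, inner_smul_right, horth]
  by_cases h : α = γ
  · subst h; simp [hγ]
  · simp [h, hσ.ne h]

end OrthogonalFamily

theorem PiLp.adjoint_apply_of_eq_sum {ι 𝕜 H : Type*} [Fintype ι] [RCLike 𝕜]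
    [NormedAddCommGroup H] [InnerProductSpace 𝕜 H] [CompleteSpace H] {T : ι → H →L[𝕜] H}
    {S : PiLp 2 (fun _ : ι => H) →L[𝕜] H} (hS : ∀ f, S f = ∑ i, T i (f i)) (x : H) (i : ι) :
    (S†) x i = ((T i)†) x := by
  classical
  refine ext_inner_left 𝕜 fun v => ?_
  have := S.adjoint_inner_right (WithLp.toLp 2 (Pi.single i v)) x
  rw [hS, PiLp.inner_apply] at this
  simpa [Pi.single_apply, apply_ite (inner 𝕜), ite_apply, apply_ite (T _),
    (T i).adjoint_inner_right] using this

section MultiIndex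

variable {n : ℕ}

theorem rhoR_pos (m : ℕ) (α : Fin n → ℕ) : 0 < rhoR m α := by
  unfold rhoR
  have := Finset.prod_pos fun i (_ : i ∈ Finset.univ) =>
    (Nat.cast_pos (α := ℝ)).mpr (α i).factorial_pos
  positivity

theorem sum_add_single (γ : Fin n → ℕ) (i : Fin n) :
    ∑ j, (γ + Pi.single i 1 : Fin n → ℕ) j = ∑ j, γ j + 1 := by
  simp [Finset.sum_add_distrib]

theorem prod_factorial_add_single (γ : Fin n → ℕ) (i : Fin n) :
    ∏ j, ((γ + Pi.single i 1 : Fin n → ℕ) j).factorial = (γ i + 1) * ∏ j, (γ j).factorial := by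
  have hpt : ∀ j, ((γ + Pi.single i 1 : Fin n → ℕ) j).factorial
      = (γ j).factorial * if j = i then γ i + 1 else 1 := fun j => by
    rcases eq_or_ne j i with rfl | hj
    · simp [Nat.factorial_succ, mul_comm]
    · simp [hj]
  rw [Fintype.prod_congr _ _ hpt, Finset.prod_mul_distrib, Finset.prod_ite_eq', mul_comm]
  simp

theorem rhoR_add_single {m : ℕ} (hm : 1 ≤ m) (γ : Fin n → ℕ) (i : Fin n) :
    ((γ i : ℝ) + 1) * rhoR m (γ + Pi.single i 1) = (m + ∑ j, (γ j : ℝ)) * rhoR m γ := by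
  have hfac : (m + (∑ j, γ j + 1) - 1).factorial
      = (m + ∑ j, γ j) * (m + ∑ j, γ j - 1).factorial := by
    rw [show m + (∑ j, γ j + 1) - 1 = m + ∑ j, γ j by omega, Nat.mul_factorial_pred (by omega)]
  have hprod : ∏ j, (((γ + Pi.single i 1 : Fin n → ℕ) j).factorial : ℝ)
      = (γ i + 1) * ∏ j, ((γ j).factorial : ℝ) := by
    exact_mod_cast prod_factorial_add_single γ i
  have := Finset.prod_pos fun j (_ : j ∈ Finset.univ) =>
    (Nat.cast_pos (α := ℝ)).mpr (γ j).factorial_pos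
  unfold rhoR
  rw [sum_add_single, hfac, hprod]
  push_cast
  field_simp

end MultiIndex

structure IsMonomialShift (m : ℕ) {n : ℕ} {H : Type*} [NormedAddCommGroup H]
    [InnerProductSpace ℂ H] (e : (Fin n → ℕ) → H) (Mz : Fin n → H →L[ℂ] H) : Prop where
  inner_eq : ∀ α β, ⟪e α, e β⟫_ℂ = if α = β then ((rhoR m α)⁻¹ : ℂ) else 0
  dense_span : Dense ((Submodule.span ℂ (Set.range e) : Submodule ℂ H) : Set H)
  apply_eq : ∀ i α, Mz i (e α) = e (α + Pi.single i 1)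

namespace IsMonomialShift

variable {n m : ℕ} {H : Type*} [NormedAddCommGroup H] [InnerProductSpace ℂ H] [CompleteSpace H]
  {e : (Fin n → ℕ) → H} {Mz : Fin n → H →L[ℂ] H}

theorem adjoint_apply_add_single (h : IsMonomialShift m e Mz) (hm : 1 ≤ m) (i : Fin n)
    (γ : Fin n → ℕ) :
    ((Mz i)†) (e (γ + Pi.single i 1)) = (((γ i : ℂ) + 1) / (m + ∑ j, (γ j : ℂ))) • e γ := by
  have hρ : (rhoR m γ : ℂ) ≠ 0 := Complex.ofReal_ne_zero.mpr (rhoR_pos m γ).ne'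
  have hρ' : (rhoR m (γ + Pi.single i 1) : ℂ) ≠ 0 :=
    Complex.ofReal_ne_zero.mpr (rhoR_pos m _).ne'
  have hdeg : (m : ℂ) + ∑ j, (γ j : ℂ) ≠ 0 := by norm_cast; omega
  have hratio := congrArg Complex.ofReal (rhoR_add_single hm γ i)
  push_cast at hratio
  rw [(Mz i).adjoint_apply_eq_smul_of_injective h.inner_eq h.dense_span (h.apply_eq i)
    (add_left_injective _) (inv_ne_zero hρ)]
  congr 1
  field_simp
  linear_combination -hratio

theorem adjoint_apply_eq_zero (h : IsMonomialShift m e Mz) {i : Fin n} {β : Fin n → ℕ}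
    (hβ : β i = 0) : ((Mz i)†) (e β) = 0 :=
  (Mz i).adjoint_apply_eq_zero_of_notMem_range h.inner_eq h.dense_span (h.apply_eq i)
    fun ⟨γ, hγ⟩ => by simpa [hβ] using congrFun hγ i

theorem apply_adjoint_apply (h : IsMonomialShift m e Mz) (hm : 1 ≤ m) (i : Fin n)
    (β : Fin n → ℕ) :
    Mz i (((Mz i)†) (e β)) = ((β i : ℂ) / (m + ∑ j, (β j : ℂ) - 1)) • e β := by
  rcases eq_or_ne (β i) 0 with hβ | hβ
  · simp [h.adjoint_apply_eq_zero hβ, hβ]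
  have hle : Pi.single i 1 ≤ β := fun j => by
    rcases eq_or_ne j i with rfl | hj
    · simpa [Nat.one_le_iff_ne_zero] using hβ
    · simp [hj]
  obtain ⟨γ, rfl⟩ : ∃ γ, γ + Pi.single i 1 = β := ⟨β - Pi.single i 1, tsub_add_cancel_of_le hle⟩
  have hsum : ∑ j, ((γ + Pi.single i 1 : Fin n → ℕ) j : ℂ) = ∑ j, (γ j : ℂ) + 1 := by
    exact_mod_cast sum_add_single γ i
  rw [h.adjoint_apply_add_single hm, map_smul, h.apply_eq, hsum]
  congr 1
  simp only [Pi.add_apply, Pi.single_eq_same]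
  push_cast
  ring

variable {Mrow : PiLp 2 (fun _ : Fin n => H) →L[ℂ] H}

theorem row_adjoint_apply_eq_zero (h : IsMonomialShift m e Mz)
    (hMrow : ∀ f, Mrow f = ∑ i, Mz i (f i)) {β : Fin n → ℕ} (hβ : ∑ i, β i = 0) :
    (Mrow†) (e β) = 0 := by
  ext i
  rw [PiLp.adjoint_apply_of_eq_sum hMrow,
    h.adjoint_apply_eq_zero (Finset.sum_eq_zero_iff.mp hβ i (Finset.mem_univ i))]
  rfl

theorem row_apply_row_adjoint_apply (h : IsMonomialShift m e Mz) (hm : 1 ≤ m)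
    (hMrow : ∀ f, Mrow f = ∑ i, Mz i (f i)) (β : Fin n → ℕ) :
    Mrow ((Mrow†) (e β)) = ((∑ j, (β j : ℂ)) / (m + ∑ j, (β j : ℂ) - 1)) • e β := by
  simp only [hMrow, PiLp.adjoint_apply_of_eq_sum hMrow, h.apply_adjoint_apply hm,
    ← Finset.sum_smul, Finset.sum_div]

end IsMonomialShift

/-- `M_z* δ f` lies in `Im M_z*`, on which `M_z* M_z` is invertible, so the identity
`M_z* δ f = (M_z* M_z)⁻¹ (M_z* f)` is stated as `(M_z* M_z)(M_z* δ f) = M_z* f`. `H_m(𝔹)` is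
modelled by its orthogonal monomials `e α`, with `‖e α‖² = 1 / ρ_m(α)` and dense span. -/
theorem cauchy_dual_identity (n m : ℕ) (hm : 1 ≤ m)
    {H : Type*} [NormedAddCommGroup H] [InnerProductSpace ℂ H] [CompleteSpace H]
    (e : (Fin n → ℕ) → H)
    (horth : ∀ α β, ⟪e α, e β⟫_ℂ = if α = β then ((rhoR m α)⁻¹ : ℂ) else 0)
    (hdense : Dense ((Submodule.span ℂ (Set.range e) : Submodule ℂ H) : Set H))
    (Mz : Fin n → H →L[ℂ] H)
    (hMz : ∀ i α, Mz i (e α) = e (α + Pi.single i 1))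
    (Mrow : PiLp 2 (fun _ : Fin n => H) →L[ℂ] H)
    (hMrow : ∀ f, Mrow f = ∑ i, Mz i (f i))
    (δ : H →L[ℂ] H)
    (hδ : ∀ α, δ (e α) = if (∑ i, α i) = 0 then e α
        else (((m : ℂ) + (∑ i, α i) - 1) / ((∑ i, α i : ℕ) : ℂ)) • e α) :
    ∀ f : H, (Mrow).adjoint (Mrow ((Mrow).adjoint (δ f))) = (Mrow).adjoint f := by
  intro f
  have h : IsMonomialShift m e Mz := ⟨horth, hdense, hMz⟩
  suffices (Mrow†) ∘L Mrow ∘L (Mrow†) ∘L δ = Mrow† from congr($this f)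
  refine ContinuousLinearMap.ext_on hdense ?_
  rintro _ ⟨β, rfl⟩
  simp only [ContinuousLinearMap.comp_apply]
  by_cases hβ : ∑ i, β i = 0
  · simp [hδ, hβ, h.row_adjoint_apply_eq_zero hMrow hβ]
  have hdeg : (m : ℂ) + ∑ i, (β i : ℂ) - 1 ≠ 0 := by
    rw [show (m : ℂ) + ∑ i, (β i : ℂ) - 1 = ((m - 1 + ∑ i, β i : ℕ) : ℂ) by
      push_cast [Nat.cast_sub hm]; ring]
    exact_mod_cast (by omega : m - 1 + ∑ i, β i ≠ 0)
  have hβ' : ((∑ i, β i : ℕ) : ℂ) ≠ 0 := Nat.cast_ne_zero.mpr hβ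
  rw [hδ, if_neg hβ, map_smul, map_smul, h.row_apply_row_adjoint_apply hm hMrow, smul_smul]
  push_cast at hβ' ⊢
  rw [div_mul_div_comm, mul_comm (_ - 1), div_self (mul_ne_zero hβ' hdeg), one_smul]
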